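/- arXiv:2211.07984 — 3 statements merged into one kernel-verified Lean document; each statement's English description precedes it below -/
import Mathlib

section
/- Let Y be a finite set, E : Y → Finset Y symmetric and irreflexive, F : Y → Finset Y with E(u) and F(u) disjoint for each u, and suppose for all distinct u, v ∈ Y exactly one of the following holds: v ∈ E(u) (equivalently u ∈ E(v)), or v ∈ F(u), or u ∈ F(v). Define f(x) = c + ∑_{u∈Y} L_u x_u + (1/2)∑_{u∈Y}∑_{v∈E(u)}(1+x_u)(1-x_v) + 2∑_{u∈Y}∑_{v∈F(u)} x_u(1-x_v) for real constants c and L_u. Then f(x) = c' + ∑_{u∈Y}(L_u + 2|F(u)|)x_u + (1/2)∑_{u,v∈Y} q_{u,v} x_u x_v, where c' = c + (1/2)∑_{u∈Y}|E(u)|, q_{u,v} = 0 if u = v, q_{u,v} = -1 if v ∈ E(u), and q_{u,v} = -2 otherwise. -/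
/-!
Expanding the products, the constant and the linear terms of both sides visibly agree, except
for the terms `x u - x v` coming from the `E`-sum, which cancel because `E` is symmetric. What
remains is the identity `q = -𝟙_E - 2 𝟙_F - 2 𝟙_Fᵀ` between coefficient matrices, which is the
trichotomy hypothesis read pair by pair. Since a double sum `∑ u, ∑ v, f u v` only depends on
the symmetrization `f u v + f v u`, it suffices to write both sides as double sums and compare
their symmetrized summands pair by pair.
-/

open Finset

theorem Fintype.sum_sum_eq_of_add_swap {ι M : Type*} [Fintype ι] [AddCommMonoid M]
    [IsAddTorsionFree M] {f g : ι → ι → M} (h : ∀ i j, f i j + f j i = g i j + g j i) :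
    ∑ i, ∑ j, f i j = ∑ i, ∑ j, g i j := by
  have two_nsmul_eq (k : ι → ι → M) : 2 • ∑ i, ∑ j, k i j = ∑ i, ∑ j, (k i j + k j i) := by
    rw [two_nsmul]
    nth_rw 2 [sum_comm]
    simp only [sum_add_distrib]
  apply IsAddTorsionFree.nsmul_right_injective two_ne_zero
  simp only [two_nsmul_eq, h]

section QuadraticModel

variable {Y : Type*} [DecidableEq Y] {E F : Y → Finset Y}

theorem quadratic_coeff_eq (hEirr : ∀ u, u ∉ E u) (hFirr : ∀ u, u ∉ F u)
    (htri : ∀ u v : Y, u ≠ v →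
      (v ∈ E u ∧ v ∉ F u ∧ u ∉ F v) ∨ (v ∉ E u ∧ v ∈ F u ∧ u ∉ F v) ∨
      (v ∉ E u ∧ v ∉ F u ∧ u ∈ F v))
    (u v : Y) :
    (if u = v then (0 : ℝ) else if v ∈ E u then -1 else -2)
      = -(if v ∈ E u then 1 else 0) - 2 * (if v ∈ F u then 1 else 0)
          - 2 * (if u ∈ F v then 1 else 0) := by
  by_cases huv : u = v
  · subst huv
    simp [hEirr u, hFirr u]
  · rcases htri u v huv with ⟨hE, hF, hF'⟩ | ⟨hE, hF, hF'⟩ | ⟨hE, hF, hF'⟩ <;>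
      norm_num [huv, hE, hF, hF']

theorem quadratic_model_summand_add_swap (hE : ∀ u v : Y, v ∈ E u ↔ u ∈ E v)
    (hEirr : ∀ u, u ∉ E u) (hFirr : ∀ u, u ∉ F u)
    (htri : ∀ u v : Y, u ≠ v →
      (v ∈ E u ∧ v ∉ F u ∧ u ∉ F v) ∨ (v ∉ E u ∧ v ∈ F u ∧ u ∉ F v) ∨
      (v ∉ E u ∧ v ∉ F u ∧ u ∈ F v))
    (x : Y → ℝ) (u v : Y) :
    let lhs : Y → Y → ℝ := fun u v ↦
      1 / 2 * ((if v ∈ E u then 1 else 0) * ((1 + x u) * (1 - x v)))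
        + 2 * ((if v ∈ F u then 1 else 0) * (x u * (1 - x v)))
    let rhs : Y → Y → ℝ := fun u v ↦
      1 / 2 * (if v ∈ E u then 1 else 0) + 2 * ((if v ∈ F u then 1 else 0) * x u)
        + 1 / 2 * ((if u = v then 0 else if v ∈ E u then -1 else -2) * x u * x v)
    lhs u v + lhs v u = rhs u v + rhs v u := by
  have hE_symm : (if u ∈ E v then (1 : ℝ) else 0) = if v ∈ E u then 1 else 0 := by
    simp only [hE u v]
  simp only [quadratic_coeff_eq hEirr hFirr htri u v, quadratic_coeff_eq hEirr hFirr htri v u,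
    hE_symm]
  ring

end QuadraticModel

theorem quadratic_model_decomposition_general (Y : Type*) [Fintype Y] [DecidableEq Y]
    (E F : Y → Finset Y)
    (hE : ∀ u v : Y, v ∈ E u ↔ u ∈ E v)
    (hEirr : ∀ u : Y, u ∉ E u)
    (hFirr : ∀ u : Y, u ∉ F u)
    (htri : ∀ u v : Y, u ≠ v →
      (v ∈ E u ∧ v ∉ F u ∧ u ∉ F v) ∨ (v ∉ E u ∧ v ∈ F u ∧ u ∉ F v) ∨
      (v ∉ E u ∧ v ∉ F u ∧ u ∈ F v))
    (c : ℝ) (L : Y → ℝ) (x : Y → ℝ) :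
    c + ∑ u : Y, L u * x u
      + (1 / 2) * ∑ u : Y, ∑ v ∈ E u, (1 + x u) * (1 - x v)
      + 2 * ∑ u : Y, ∑ v ∈ F u, x u * (1 - x v)
    = (c + (1 / 2) * ∑ u : Y, ((E u).card : ℝ))
      + ∑ u : Y, (L u + 2 * ((F u).card : ℝ)) * x u
      + (1 / 2) * ∑ u : Y, ∑ v : Y,
          (if u = v then (0 : ℝ) else if v ∈ E u then -1 else -2) * x u * x v := by
  have hquad := Fintype.sum_sum_eq_of_add_swap
    (quadratic_model_summand_add_swap hE hEirr hFirr htri x)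
  simp only [boole_mul, sum_add_distrib, ← mul_sum] at hquad
  simp only [Fintype.sum_ite_mem, sum_const, nsmul_eq_mul, mul_one] at hquad
  have hlinear : ∑ u : Y, (L u + 2 * ((F u).card : ℝ)) * x u
      = ∑ u : Y, L u * x u + 2 * ∑ u : Y, ((F u).card : ℝ) * x u := by
    simp only [add_mul, sum_add_distrib, mul_sum, mul_assoc]
  rw [hlinear]
  linear_combination hquad

/-- Proposition 3.1 of the paper in abstract form: the cost function
`f(x) = c + ∑ L_u x_u + (1/2)∑_{u}∑_{v∈E(u)}(1+x_u)(1-x_v) + 2∑_{u}∑_{v∈F(u)} x_u(1-x_v)`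
equals `c + (1/2)∑|E(u)| + ∑(L_u + 2|F(u)|)x_u + (1/2)∑_{u,v} q_{u,v} x_u x_v`,
where `q_{u,v} = 0` if `u = v`, `-1` if `v ∈ E(u)`, and `-2` otherwise. -/
theorem quadratic_model_decomposition (Y : Type*) [Fintype Y] [DecidableEq Y]
    (E F : Y → Finset Y)
    (hE : ∀ u v : Y, v ∈ E u ↔ u ∈ E v)
    (hEirr : ∀ u : Y, u ∉ E u)
    (hEF : ∀ u : Y, E u ∩ F u = ∅)
    (hFirr : ∀ u : Y, u ∉ F u)
    (htri : ∀ u v : Y, u ≠ v →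
      (v ∈ E u ∧ v ∉ F u ∧ u ∉ F v) ∨ (v ∉ E u ∧ v ∈ F u ∧ u ∉ F v) ∨
      (v ∉ E u ∧ v ∉ F u ∧ u ∈ F v))
    (c : ℝ) (L : Y → ℝ) (x : Y → ℝ) :
    c + ∑ u : Y, L u * x u
      + (1 / 2) * ∑ u : Y, ∑ v ∈ E u, (1 + x u) * (1 - x v)
      + 2 * ∑ u : Y, ∑ v ∈ F u, x u * (1 - x v)
    = (c + (1 / 2) * ∑ u : Y, ((E u).card : ℝ))
      + ∑ u : Y, (L u + 2 * ((F u).card : ℝ)) * x u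
      + (1 / 2) * ∑ u : Y, ∑ v : Y,
          (if u = v then (0 : ℝ) else if v ∈ E u then -1 else -2) * x u * x v :=
  quadratic_model_decomposition_general Y E F hE hEirr hFirr htri c L x
end

section
/- Let Y be a finite set with disjoint relations E, F : Y → Finset Y as in the broom setting (E symmetric irreflexive; F transitive and such that v ∈ F(u) implies C_v ⊆ C_u, D_u ⊆ D_v, F_v ⊆ F_u). Define q_{u,v} as 0 if u = v, −1 if v ∈ E(u), −2 otherwise. Then for all u ∈ Y, v ∈ F(u), and w ∈ Y with w ≠ v: q_{u,w} − q_{v,w} ≥ −1, and q_{u,w} − q_{v,w} = −1 only if w ∈ F(u) ∩ E(v). -/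
/-- The key coefficient comparison in the proof of Lemma 4.2: with
`q_{u,v} = 0` if `u = v`, `-1` if `v ∈ E(u)`, `-2` otherwise, one has, for
`v ∈ F(u)` and `w ≠ v`, `q_{u,w} - q_{v,w} ≥ -1`, with equality to `-1` only if
`w ∈ F(u) ∩ E(v)`. -/
theorem coefficient_comparison (Y : Type*) [DecidableEq Y]
    (E F : Y → Finset Y)
    (hE : ∀ u v : Y, v ∈ E u ↔ u ∈ E v)
    (hEirr : ∀ u : Y, u ∉ E u)
    (hEF : ∀ u : Y, E u ∩ F u = ∅)
    (hFirr : ∀ u : Y, u ∉ F u)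
    (htri : ∀ u v : Y, u ≠ v →
      (v ∈ E u ∧ v ∉ F u ∧ u ∉ F v) ∨ (v ∉ E u ∧ v ∈ F u ∧ u ∉ F v) ∨
      (v ∉ E u ∧ v ∉ F u ∧ u ∈ F v))
    (hFtrans : ∀ u v w : Y, v ∈ F u → w ∈ F v → w ∈ F u)
    (q : Y → Y → ℝ)
    (hq : ∀ u v : Y, q u v = if u = v then 0 else if v ∈ E u then -1 else -2) :
    ∀ u v w : Y, v ∈ F u → w ≠ v →
      -1 ≤ q u w - q v w ∧ (q u w - q v w = -1 → w ∈ F u ∩ E v) := by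
  intro u v w hvFu hwv
  have hvw : v ≠ w := fun h => hwv h.symm
  rw [hq, hq, if_neg hvw]
  by_cases huw : u = w
  · subst huw
    rw [if_pos rfl]
    split <;> norm_num
  · rw [if_neg huw]
    by_cases h1 : w ∈ E u
    · rw [if_pos h1]
      by_cases h2 : w ∈ E v <;> simp [h2] <;> norm_num
    · rw [if_neg h1]
      by_cases h2 : w ∈ E v
      · rw [if_pos h2]
        refine ⟨by norm_num, fun _ => ?_⟩
        have hwu : w ≠ u := fun h => huw h.symm
        rcases htri u w huw with ⟨hc, _, _⟩ | ⟨_, hwFu, _⟩ | ⟨_, _, huFw⟩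
        · exact absurd hc h1
        · exact Finset.mem_inter.mpr ⟨hwFu, h2⟩
        · -- u ∈ F w, v ∈ F u ⇒ v ∈ F w, contradicting w ∈ E v via trichotomy
          have hvFw : v ∈ F w := hFtrans w u v huFw hvFu
          rcases htri v w hvw with ⟨_, _, hvnFw⟩ | ⟨hc, _, _⟩ | ⟨hc, _, _⟩
          · exact absurd hvFw hvnFw
          · exact absurd h2 hc
          · exact absurd h2 hc
      · rw [if_neg h2]
        norm_num
end

section
/- Let Y be a finite set, w : (Y ∪ {s,t})² → ℝ≥0 symmetric edge weights on the complete split graph H with clique Y and independent set {s,t}, defined by w_{u,v} = −q_{u,v}/2 for u,v ∈ Y, w_{s,v} = max(0, −r_v − ℓ_v), w_{u,t} = max(0, r_u + ℓ_u), where r_u = −∑_{v∈Y} w_{u,v}. Then for every x ∈ {0,1}^Y, the value of the (s,t)-cut encoded by x (with x_u = 1 meaning u is on the s-side) equals ∑_{v∈Y} w_{s,v} + ∑_{u∈Y} ℓ_u x_u + (1/2)∑_{u,v∈Y} q_{u,v} x_u x_v. -/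
/-- Lemma 5.1 (Picard–Ratliff reduction): the value of the `(s,t)`-cut of the
complete split graph `H` encoded by `x ∈ {0,1}^Y` equals
`∑_{v} w_{s,v} + ∑_u ℓ_u x_u + (1/2)∑_{u,v} q_{u,v} x_u x_v`. -/
theorem cut_value_eq_quadratic (Y : Type*) [Fintype Y]
    (q : Y → Y → ℝ) (hsym : ∀ u v : Y, q u v = q v u) (hdiag : ∀ u : Y, q u u = 0)
    (hnonpos : ∀ u v : Y, q u v ≤ 0)
    (l : Y → ℝ)
    (w : Y → Y → ℝ) (hw : ∀ u v : Y, w u v = -q u v / 2)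
    (r : Y → ℝ) (hr : ∀ u : Y, r u = -∑ v : Y, w u v)
    (ws : Y → ℝ) (hws : ∀ v : Y, ws v = max 0 (-r v - l v))
    (wt : Y → ℝ) (hwt : ∀ u : Y, wt u = max 0 (r u + l u))
    (x : Y → ℝ) (hx : ∀ u : Y, x u = 0 ∨ x u = 1) :
    ∑ v : Y, ws v * (1 - x v)
      + ∑ u : Y, ∑ v : Y, w u v * x u * (1 - x v)
      + ∑ u : Y, wt u * x u
    = ∑ v : Y, ws v + ∑ u : Y, l u * x u
      + (1 / 2) * ∑ u : Y, ∑ v : Y, q u v * x u * x v := by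
  have key : ∀ u : Y, wt u * x u - ws u * x u = (r u + l u) * x u := by
    intro u
    rw [hws, hwt]
    rcases le_total 0 (r u + l u) with h | h
    · rw [max_eq_right h, max_eq_left (by linarith)]; ring
    · rw [max_eq_left h, max_eq_right (by linarith)]; ring
  have h1 : ∑ u : Y, ∑ v : Y, w u v * x u * (1 - x v)
      = -∑ u : Y, r u * x u - ∑ u : Y, ∑ v : Y, w u v * x u * x v := by
    rw [← Finset.sum_neg_distrib, ← Finset.sum_sub_distrib]
    refine Finset.sum_congr rfl fun u _ => ?_
    rw [hr]
    have : ∑ v : Y, w u v * x u = (∑ v : Y, w u v) * x u := by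
      rw [Finset.sum_mul]
    have h2 : ∑ v : Y, w u v * x u * (1 - x v)
        = ∑ v : Y, w u v * x u - ∑ v : Y, w u v * x u * x v := by
      rw [← Finset.sum_sub_distrib]
      exact Finset.sum_congr rfl fun v _ => by ring
    rw [h2, this]
    ring
  have h3 : ∑ u : Y, ∑ v : Y, q u v * x u * x v
      = -2 * ∑ u : Y, ∑ v : Y, w u v * x u * x v := by
    rw [Finset.mul_sum]
    refine Finset.sum_congr rfl fun u _ => ?_
    rw [Finset.mul_sum]
    refine Finset.sum_congr rfl fun v _ => ?_
    rw [hw]; ring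
  have h4 : ∑ v : Y, ws v * (1 - x v) = ∑ v : Y, ws v - ∑ v : Y, ws v * x v := by
    rw [← Finset.sum_sub_distrib]
    exact Finset.sum_congr rfl fun v _ => by ring
  have h5 : ∑ u : Y, wt u * x u - ∑ u : Y, ws u * x u
      = ∑ u : Y, r u * x u + ∑ u : Y, l u * x u := by
    rw [← Finset.sum_sub_distrib, ← Finset.sum_add_distrib]
    exact Finset.sum_congr rfl fun u _ => by rw [key]; ring
  rw [h1, h3, h4]
  linarith [h5]
end
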